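/- The average success probability of the randomized Grover strategy, ∫₀¹ sin²(π r √m / 2) dr, equals 1/2 − sin(π√m)/(2π√m), and for every positive integer m this quantity is at least 1/2 − sin(√6 π)/(2√6 π) ≈ 0.435; in particular it is bounded below by a positive constant independent of m. -/

import Mathlib

/-!
The integral is elementary: `sin² t = (1 - cos 2t) / 2`. For the bound, write `x = √m`; we show
`sin (π x) / (2 π x) ≤ 1 / (5 π) ≤ sin (√6 π) / (2 √6 π)` whenever `m ≠ 6`. The second
inequality says `sin (√6 π) ≥ (2/5) √6`, which holds because `√6 π` lies just below `5π/2`,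
where the sine is `1`. The first says `sin (π x) ≤ (2/5) x`: for `m ≤ 4` the sine is nonpositive
since `1 ≤ x ≤ 2`, for `m = 5` it is at most `π (√5 - 2)`, and for `m ≥ 7` we have
`(2/5) x > 1`.
-/

open Real

theorem integral_sin_mul_sq {c : ℝ} (hc : c ≠ 0) :
    ∫ x in (0:ℝ)..1, sin (c * x) ^ 2 = 1 / 2 - sin (2 * c) / (4 * c) := by
  rw [intervalIntegral.integral_comp_mul_left (fun x => sin x ^ 2) hc, mul_zero, mul_one,
    integral_sin_sq, sin_two_mul, smul_eq_mul]
  simp only [sin_zero, zero_mul, zero_sub, sub_zero]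
  field_simp
  ring

theorem integral_sin_pi_mul_mul_div_two_sq {a : ℝ} (ha : a ≠ 0) :
    ∫ r in (0:ℝ)..1, sin (π * r * a / 2) ^ 2 = 1 / 2 - sin (π * a) / (2 * π * a) := by
  convert integral_sin_mul_sq (c := π * a / 2) (by positivity) using 3 <;> ring_nf

theorem two_fifths_mul_sqrt_six_le_sin_sqrt_six_mul_pi : 2 / 5 * √6 ≤ sin (√6 * π) := by
  obtain ⟨d, hd⟩ : ∃ d, √6 = 5 / 2 - d := ⟨5 / 2 - √6, by ring⟩
  have hd₀ : 0 ≤ d := by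
    have : √6 ≤ 5 / 2 := by rw [sqrt_le_left] <;> norm_num
    linarith
  have hd₁ : d ≤ 3 / 50 := by
    have : 61 / 25 ≤ √6 := by rw [le_sqrt] <;> norm_num
    linarith
  have hsin : sin (√6 * π) = cos (d * π) := by
    rw [← cos_sub_pi_div_two, ← cos_sub_two_pi, ← cos_neg, hd]
    ring_nf
  have hπ : π ^ 2 ≤ 10 := by nlinarith [pi_lt_d2, pi_pos]
  rw [hsin, hd]
  -- `1 - cos (d π) ≤ (d π)² / 2 ≤ (2/5) d` as `d π² ≤ 4/5`
  nlinarith [one_sub_sq_div_two_le_cos (x := d * π),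
    mul_le_mul hd₁ hπ (sq_nonneg π) (by norm_num)]

theorem sin_pi_mul_nonpos_of_mem_Icc {x : ℝ} (h₁ : 1 ≤ x) (h₂ : x ≤ 2) : sin (π * x) ≤ 0 := by
  rw [← sin_sub_two_pi]
  apply sin_nonpos_of_nonpos_of_neg_pi_le <;> nlinarith [pi_pos]

theorem sin_pi_mul_le_of_two_le {x : ℝ} (h : 2 ≤ x) : sin (π * x) ≤ π * (x - 2) := by
  rw [← sin_sub_two_pi]
  convert sin_le (x := π * x - 2 * π) (by nlinarith [pi_pos]) using 1
  ring

theorem sin_pi_mul_sqrt_le_two_fifths_mul_sqrt {m : ℕ} (hm₀ : 0 < m) (hm₆ : m ≠ 6) :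
    sin (π * √m) ≤ 2 / 5 * √m := by
  rcases le_or_gt m 4 with hm₄ | hm₅
  · have h₁ : 1 ≤ √(m : ℝ) := one_le_sqrt.mpr (by exact_mod_cast hm₀)
    have h₂ : √(m : ℝ) ≤ 2 := sqrt_le_iff.mpr ⟨by norm_num, by norm_num; exact_mod_cast hm₄⟩
    linarith [sin_pi_mul_nonpos_of_mem_Icc h₁ h₂]
  obtain rfl | hm₇ : m = 5 ∨ 7 ≤ m := by omega
  · have h₁ : 2 ≤ √(5 : ℝ) := le_sqrt_of_sq_le (by norm_num)
    have h₂ : √(5 : ℝ) ≤ 9 / 4 := sqrt_le_iff.mpr ⟨by norm_num, by norm_num⟩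
    push_cast
    nlinarith [sin_pi_mul_le_of_two_le h₁, pi_lt_d2]
  · have : 5 / 2 ≤ √(m : ℝ) :=
      le_sqrt_of_sq_le (by linarith [show (7 : ℝ) ≤ m by exact_mod_cast hm₇])
    linarith [sin_le_one (π * √m)]

theorem sin_pi_mul_div_le_of_le_two_fifths_mul {x : ℝ} (hx : 0 < x)
    (h : sin (π * x) ≤ 2 / 5 * x) :
    sin (π * x) / (2 * π * x) ≤ sin (√6 * π) / (2 * √6 * π) := calc
  sin (π * x) / (2 * π * x) ≤ 2 / 5 * x / (2 * π * x) := by gcongr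
  _ = 1 / (5 * π) := by field_simp
  _ ≤ sin (√6 * π) / (2 * √6 * π) := by
    rw [div_le_div_iff₀ (by positivity) (by positivity)]
    nlinarith [two_fifths_mul_sqrt_six_le_sin_sqrt_six_mul_pi, pi_pos]

theorem sin_pi_mul_sqrt_div_le {m : ℕ} (hm : 0 < m) :
    sin (π * √m) / (2 * π * √m) ≤ sin (√6 * π) / (2 * √6 * π) := by
  by_cases hm₆ : m = 6
  · subst hm₆
    push_cast
    rw [mul_comm π, mul_right_comm]
  · exact sin_pi_mul_div_le_of_le_two_fifths_mul (by positivity)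
      (sin_pi_mul_sqrt_le_two_fifths_mul_sqrt hm hm₆)

theorem sin_sqrt_six_mul_pi_div_lt_half : sin (√6 * π) / (2 * √6 * π) < 1 / 2 := by
  have h₆ : 2 ≤ √(6 : ℝ) := le_sqrt_of_sq_le (by norm_num)
  rw [div_lt_div_iff₀ (by positivity) (by norm_num)]
  nlinarith [sin_le_one (√6 * π), pi_gt_three]

/-- The average success probability of the randomized Grover strategy,
`∫₀¹ sin²(π r √m / 2) dr`, equals `1/2 − sin(π√m)/(2π√m)`, and for every positive
integer `m` this quantity is at least `1/2 − sin(√6 π)/(2√6 π)`; in particular it is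
bounded below by a positive constant independent of `m`. -/
theorem stmt6 (m : ℕ) (hm : 0 < m) :
    (∫ r in (0:ℝ)..1, Real.sin (Real.pi * r * Real.sqrt m / 2) ^ 2)
        = 1 / 2 - Real.sin (Real.pi * Real.sqrt m) / (2 * Real.pi * Real.sqrt m) ∧
    (1 / 2 - Real.sin (Real.sqrt 6 * Real.pi) / (2 * Real.sqrt 6 * Real.pi)
        ≤ 1 / 2 - Real.sin (Real.pi * Real.sqrt m) / (2 * Real.pi * Real.sqrt m)) ∧
    (0 < 1 / 2 - Real.sin (Real.sqrt 6 * Real.pi) / (2 * Real.sqrt 6 * Real.pi)) :=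
  ⟨integral_sin_pi_mul_mul_div_two_sq (by positivity),
    sub_le_sub_left (sin_pi_mul_sqrt_div_le hm) _,
    sub_pos.mpr sin_sqrt_six_mul_pi_div_lt_half⟩
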